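/- arXiv:1509.01912 — 6 statements merged into one kernel-verified Lean document; each statement's English description precedes it below -/
import Mathlib

section
/- Let S be a compact subset of a Banach space X and let {T_k} be a sequence of maps from S into S such that each T_k satisfies ‖T_k(x) − T_k(y)‖ ≤ ρ‖x − y‖ for all x, y ∈ S with a common ρ ∈ [0,1), and T_k converges uniformly on S to a map T_∞ : S → S which is also a ρ-contraction. Then for any initial point x_1 ∈ S, the sequence defined by x_{k+1} = T_k(x_k) converges to the unique fixed point x* ∈ S of T_∞, and this limit is independent of the initial point x_1. -/
/-!
The fixed point `p` of `T∞` exists by Banach's theorem on the complete set `S`. Along the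
iteration, `‖x (k+1) - p‖ ≤ ‖T k (x k) - T∞ (x k)‖ + ‖T∞ (x k) - T∞ p‖ ≤ e k + ρ ‖x k - p‖`
with `e k → 0` by uniform convergence, and such a perturbed geometric recursion forces
`‖x k - p‖ → 0`.
-/

open Filter Function Set Topology
open scoped NNReal

theorem tendsto_zero_of_le_mul_add {d e : ℕ → ℝ} {K : ℝ} (hK0 : 0 ≤ K) (hK1 : K < 1)
    (hd : ∀ n, 0 ≤ d n) (he : Tendsto e atTop (𝓝 0)) (h : ∀ n, d (n + 1) ≤ K * d n + e n) :
    Tendsto d atTop (𝓝 0) := by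
  refine tendsto_order.2 ⟨fun a ha ↦ .of_forall fun n ↦ ha.trans_le (hd n), fun ε hε ↦ ?_⟩
  have hK : 0 < 1 - K := sub_pos.2 hK1
  set c := ε * (1 - K) / 2
  obtain ⟨N, hN⟩ := eventually_atTop.1 (he.eventually (eventually_le_nhds (by positivity : 0 < c)))
  -- `c / (1 - K)` is the fixed point of `t ↦ K * t + c`, so the excess over it decays geometrically.
  have hfix : K * (c / (1 - K)) + c = c / (1 - K) := by field_simp; ring
  have hgeom : ∀ m, d (N + m) - c / (1 - K) ≤ K ^ m * (d N - c / (1 - K)) := fun m ↦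
    le_geom (u := fun m ↦ d (N + m) - c / (1 - K)) hK0 m fun k _ ↦ by
      have hstep := h (N + k)
      have hc := hN (N + k) (Nat.le_add_right N k)
      simp only [← add_assoc]
      linarith
  have hdecay : Tendsto (fun m ↦ K ^ m * (d N - c / (1 - K))) atTop (𝓝 0) := by
    simpa using (tendsto_pow_atTop_nhds_zero_of_lt_one hK0 hK1).mul_const (d N - c / (1 - K))
  have hc : c / (1 - K) = ε / 2 := by simp only [c]; field_simp
  obtain ⟨M, hM⟩ := eventually_atTop.1 (hdecay.eventually (eventually_lt_nhds (half_pos hε)))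
  refine eventually_atTop.2 ⟨N + M, fun n hn ↦ ?_⟩
  obtain ⟨m, rfl⟩ := Nat.exists_eq_add_of_le (le_of_add_le_left hn)
  linarith [hgeom m, hM m (by omega)]

section FixedPoint

variable {α : Type*} [MetricSpace α] {f : α → α} {S : Set α} {K : ℝ≥0}

theorem LipschitzOnWith.exists_isFixedPt_unique (hK : K < 1) (hf : LipschitzOnWith K f S)
    (hS : IsComplete S) (hSne : S.Nonempty) (hfS : MapsTo f S S) :
    ∃ p ∈ S, IsFixedPt f p ∧ ∀ q ∈ S, IsFixedPt f q → q = p := by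
  have hcontr : ContractingWith K (hfS.restrict f S S) := ⟨hK, hf.mapsToRestrict hfS⟩
  obtain ⟨x, hx⟩ := hSne
  obtain ⟨p, hpS, hp, -⟩ := ContractingWith.exists_fixedPoint' hS hfS hcontr hx (edist_ne_top _ _)
  refine ⟨p, hpS, hp, fun q hqS hq ↦ ?_⟩
  exact congrArg Subtype.val <|
    hcontr.fixedPoint_unique' (x := ⟨q, hqS⟩) (y := ⟨p, hpS⟩) (Subtype.ext hq) (Subtype.ext hp)

theorem tendsto_fixedPoint_of_tendstoUniformlyOn {F : ℕ → α → α} (hK : K < 1)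
    (hf : LipschitzOnWith K f S) (hF : TendstoUniformlyOn F f atTop S)
    (hFS : ∀ n, MapsTo (F n) S S) {p : α} (hpS : p ∈ S) (hp : IsFixedPt f p)
    {x : ℕ → α} (hx0 : x 0 ∈ S) (hx : ∀ n, x (n + 1) = F n (x n)) :
    Tendsto x atTop (𝓝 p) := by
  have hxS : ∀ n, x n ∈ S := fun n ↦ by
    induction n with
    | zero => exact hx0
    | succ n ih => exact hx n ▸ hFS n ih
  have herr : Tendsto (fun n ↦ dist (f (x n)) (F n (x n))) atTop (𝓝 0) :=
    tendsto_order.2 ⟨fun a ha ↦ .of_forall fun n ↦ ha.trans_le dist_nonneg, fun ε hε ↦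
      (Metric.tendstoUniformlyOn_iff.1 hF ε hε).mono fun n hn ↦ hn _ (hxS n)⟩
  refine tendsto_iff_dist_tendsto_zero.2 <|
    tendsto_zero_of_le_mul_add K.2 hK (fun _ ↦ dist_nonneg) herr fun n ↦ ?_
  calc dist (x (n + 1)) p = dist (F n (x n)) (f p) := by rw [hx, hp]
    _ ≤ dist (f (x n)) (F n (x n)) + dist (f (x n)) (f p) := dist_triangle_left _ _ _
    _ ≤ dist (f (x n)) (F n (x n)) + K * dist (x n) p := by
      gcongr; exact hf.dist_le_mul _ (hxS n) _ hpS
    _ = K * dist (x n) p + dist (f (x n)) (F n (x n)) := add_comm _ _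

end FixedPoint

theorem stmt_2_general {X : Type*} [NormedAddCommGroup X]
    (S : Set X) (hS : IsCompact S) (hSne : S.Nonempty)
    (T : ℕ → X → X) (Tinf : X → X) (ρ : ℝ) (hρ0 : 0 ≤ ρ) (hρ1 : ρ < 1)
    (hmaps : ∀ k, Set.MapsTo (T k) S S) (hmapsinf : Set.MapsTo Tinf S S)
    (hcontrinf : ∀ x ∈ S, ∀ y ∈ S, ‖Tinf x - Tinf y‖ ≤ ρ * ‖x - y‖)
    (hunif : ∀ ε > 0, ∃ N, ∀ k ≥ N, ∀ x ∈ S, ‖T k x - Tinf x‖ ≤ ε) :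
    ∃ xstar ∈ S, Tinf xstar = xstar ∧
      (∀ y ∈ S, Tinf y = y → y = xstar) ∧
      (∀ x : ℕ → X, x 0 ∈ S → (∀ k, x (k + 1) = T k (x k)) →
        Tendsto x atTop (nhds xstar)) := by
  have hK : (⟨ρ, hρ0⟩ : ℝ≥0) < 1 := hρ1
  have hlip : LipschitzOnWith ⟨ρ, hρ0⟩ Tinf S :=
    LipschitzOnWith.of_dist_le_mul fun x hx y hy ↦ by
      rw [dist_eq_norm, dist_eq_norm]; exact hcontrinf x hx y hy
  have hconv : TendstoUniformlyOn T Tinf atTop S :=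
    Metric.tendstoUniformlyOn_iff.2 fun ε hε ↦ by
      obtain ⟨N, hN⟩ := hunif (ε / 2) (half_pos hε)
      refine eventually_atTop.2 ⟨N, fun k hk x hx ↦ ?_⟩
      rw [dist_eq_norm, norm_sub_rev]
      exact (hN k hk x hx).trans_lt (half_lt_self hε)
  obtain ⟨p, hpS, hp, huniq⟩ := hlip.exists_isFixedPt_unique hK hS.isComplete hSne hmapsinf
  exact ⟨p, hpS, hp, huniq, fun x hx0 hx ↦
    tendsto_fixedPoint_of_tendstoUniformlyOn hK hlip hconv hmaps hpS hp hx0 hx⟩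

/-- k-dependent contraction mapping theorem: the iterates x_{k+1} = T_k(x_k) converge
to the unique fixed point of T_∞, independently of the initial point. -/
theorem stmt_2 {X : Type*} [NormedAddCommGroup X] [NormedSpace ℝ X] [CompleteSpace X]
    (S : Set X) (hS : IsCompact S) (hSne : S.Nonempty)
    (T : ℕ → X → X) (Tinf : X → X) (ρ : ℝ) (hρ0 : 0 ≤ ρ) (hρ1 : ρ < 1)
    (hmaps : ∀ k, Set.MapsTo (T k) S S) (hmapsinf : Set.MapsTo Tinf S S)
    (hcontr : ∀ k, ∀ x ∈ S, ∀ y ∈ S, ‖T k x - T k y‖ ≤ ρ * ‖x - y‖)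
    (hcontrinf : ∀ x ∈ S, ∀ y ∈ S, ‖Tinf x - Tinf y‖ ≤ ρ * ‖x - y‖)
    (hunif : ∀ ε > 0, ∃ N, ∀ k ≥ N, ∀ x ∈ S, ‖T k x - Tinf x‖ ≤ ε) :
    ∃ xstar ∈ S, Tinf xstar = xstar ∧
      (∀ y ∈ S, Tinf y = y → y = xstar) ∧
      (∀ x : ℕ → X, x 0 ∈ S → (∀ k, x (k + 1) = T k (x k)) →
        Tendsto x atTop (nhds xstar)) :=
  stmt_2_general S hS hSne T Tinf ρ hρ0 hρ1 hmaps hmapsinf hcontrinf hunif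
end

section
/- Let S be a compact subset of a Banach space X and {T_k} a sequence of self-maps of S that are ρ-contractions with a common ρ ∈ [0,1) and that converge uniformly to T_∞ : S → S. If x_{k+1} = T_k(x_k) with x_1 ∈ S, then {x_k} is a Cauchy sequence. -/
/-!
The uniform limit `T∞` of the `ρ`-contractions `Tₖ` is again a `ρ`-contraction of the complete
set `S`, so it has a fixed point `y ∈ S`, and `Tₖ y → T∞ y = y`. The distances `dₖ = ‖xₖ - y‖`
then obey `dₖ₊₁ ≤ ρ dₖ + ‖Tₖ y - y‖`: a contraction perturbed by a vanishing error, which forces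
`dₖ → 0`. So `xₖ` converges to `y`, and in particular is Cauchy.
-/

open Filter Topology Set NNReal

-- `δ / (1 - ρ)` is the fixed point of `t ↦ ρ * t + δ`.
theorem le_pow_mul_add_of_le_mul_add {a e : ℕ → ℝ} {ρ δ : ℝ} (hρ0 : 0 ≤ ρ) (hρ1 : ρ ≠ 1)
    (hrec : ∀ k, a (k + 1) ≤ ρ * a k + e k) {N : ℕ} (he : ∀ k ≥ N, e k ≤ δ) (m : ℕ) :
    a (N + m) ≤ ρ ^ m * (a N - δ / (1 - ρ)) + δ / (1 - ρ) := by
  induction m with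
  | zero => simp
  | succ m ih =>
    have hc : ρ * (δ / (1 - ρ)) + δ = δ / (1 - ρ) := by
      field_simp [sub_ne_zero.2 hρ1.symm]
      ring
    calc a (N + (m + 1)) ≤ ρ * a (N + m) + e (N + m) := hrec (N + m)
      _ ≤ ρ * (ρ ^ m * (a N - δ / (1 - ρ)) + δ / (1 - ρ)) + δ := by
        gcongr
        exact he _ (Nat.le_add_right N m)
      _ = ρ ^ (m + 1) * (a N - δ / (1 - ρ)) + δ / (1 - ρ) := by linear_combination hc

theorem tendsto_zero_of_le_mul_add_s3 {a e : ℕ → ℝ} {ρ : ℝ} (hρ0 : 0 ≤ ρ) (hρ1 : ρ < 1)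
    (ha : ∀ k, 0 ≤ a k) (hrec : ∀ k, a (k + 1) ≤ ρ * a k + e k)
    (he : Tendsto e atTop (𝓝 0)) : Tendsto a atTop (𝓝 0) := by
  refine tendsto_order.2 ⟨fun b hb ↦ .of_forall fun k ↦ hb.trans_le (ha k), fun ε hε ↦ ?_⟩
  have h1ρ : 0 < 1 - ρ := sub_pos.2 hρ1
  set δ := ε * (1 - ρ) / 2
  have hδ : δ / (1 - ρ) = ε / 2 := by simp only [δ]; field_simp
  obtain ⟨N, hN⟩ := eventually_atTop.1 (he.eventually (ge_mem_nhds (by positivity : (0 : ℝ) < δ)))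
  have hlim : Tendsto (fun m ↦ ρ ^ m * (a N - δ / (1 - ρ)) + δ / (1 - ρ)) atTop (𝓝 (ε / 2)) := by
    simpa [hδ] using
      ((tendsto_pow_atTop_nhds_zero_of_lt_one hρ0 hρ1).mul_const (a N - ε / 2)).add_const (ε / 2)
  obtain ⟨M, hM⟩ := eventually_atTop.1 (hlim.eventually (gt_mem_nhds (half_lt_self hε)))
  refine eventually_atTop.2 ⟨N + M, fun k hk ↦ ?_⟩
  obtain ⟨m, rfl⟩ := Nat.exists_eq_add_of_le (le_of_add_le_left hk)
  exact (le_pow_mul_add_of_le_mul_add hρ0 hρ1.ne hrec hN m).trans_lt (hM m (by omega))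

theorem LipschitzOnWith.of_tendsto {α β ι : Type*} [PseudoEMetricSpace α] [PseudoEMetricSpace β]
    {l : Filter ι} [l.NeBot] {K : ℝ≥0} {s : Set α} {T : ι → α → β} {f : α → β}
    (hT : ∀ i, LipschitzOnWith K (T i) s) (hlim : ∀ x ∈ s, Tendsto (fun i ↦ T i x) l (𝓝 (f x))) :
    LipschitzOnWith K f s :=
  lipschitzOnWith_iff_restrict.2 <| (isClosed_setOfPred_lipschitzWith K).mem_of_tendsto
    (tendsto_pi_nhds.2 fun x ↦ hlim x x.2) (.of_forall fun i ↦ (hT i).to_restrict)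

theorem tendsto_of_lipschitzOnWith_of_tendsto_apply {α : Type*} [PseudoMetricSpace α]
    {K : ℝ≥0} (hK : K < 1) {s : Set α} {T : ℕ → α → α}
    (hT : ∀ k, LipschitzOnWith K (T k) s) (hTs : ∀ k, MapsTo (T k) s s)
    {y : α} (hys : y ∈ s) (hy : Tendsto (fun k ↦ T k y) atTop (𝓝 y))
    {x : ℕ → α} (hx0 : x 0 ∈ s) (hxrec : ∀ k, x (k + 1) = T k (x k)) :
    Tendsto x atTop (𝓝 y) := by
  have hxs : ∀ k, x k ∈ s := fun k ↦ by
    induction k with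
    | zero => exact hx0
    | succ k ih => exact hxrec k ▸ hTs k ih
  refine tendsto_iff_dist_tendsto_zero.2 <| tendsto_zero_of_le_mul_add_s3 K.2 hK
    (fun k ↦ dist_nonneg) (fun k ↦ ?_) (tendsto_iff_dist_tendsto_zero.1 hy)
  calc dist (x (k + 1)) y ≤ dist (T k (x k)) (T k y) + dist (T k y) y :=
        hxrec k ▸ dist_triangle _ _ _
    _ ≤ K * dist (x k) y + dist (T k y) y := by
        gcongr
        exact (hT k).dist_le_mul _ (hxs k) _ hys

theorem stmt_3_general {X : Type*} [NormedAddCommGroup X]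
    (S : Set X) (hS : IsCompact S)
    (T : ℕ → X → X) (Tinf : X → X) (ρ : ℝ) (hρ0 : 0 ≤ ρ) (hρ1 : ρ < 1)
    (hmaps : ∀ k, Set.MapsTo (T k) S S) (hmapsinf : Set.MapsTo Tinf S S)
    (hcontr : ∀ k, ∀ x ∈ S, ∀ y ∈ S, ‖T k x - T k y‖ ≤ ρ * ‖x - y‖)
    (hunif : ∀ ε > 0, ∃ N, ∀ k ≥ N, ∀ x ∈ S, ‖T k x - Tinf x‖ ≤ ε)
    (x : ℕ → X) (hx0 : x 0 ∈ S) (hxrec : ∀ k, x (k + 1) = T k (x k)) :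
    CauchySeq x := by
  set K : ℝ≥0 := ⟨ρ, hρ0⟩
  have hK : K < 1 := by exact_mod_cast hρ1
  have hT : ∀ k, LipschitzOnWith K (T k) S := fun k ↦
    LipschitzOnWith.of_dist_le_mul fun a ha b hb ↦ by
      rw [dist_eq_norm, dist_eq_norm]
      exact hcontr k a ha b hb
  have hlim : TendstoUniformlyOn T Tinf atTop S := Metric.tendstoUniformlyOn_iff.2 fun ε hε ↦
    (eventually_atTop.2 (hunif (ε / 2) (half_pos hε))).mono fun k hk z hz ↦ by
      rw [dist_comm, dist_eq_norm]
      exact (hk z hz).trans_lt (half_lt_self hε)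
  have hTinf : LipschitzOnWith K Tinf S :=
    .of_tendsto hT fun z hz ↦ hlim.tendsto_at hz
  obtain ⟨y, hyS, hy, -⟩ := ContractingWith.exists_fixedPoint' hS.isComplete hmapsinf
    ⟨hK, hmapsinf.lipschitzOnWith_iff_restrict.1 hTinf⟩ hx0 (edist_ne_top _ _)
  have hTy : Tendsto (fun k ↦ T k y) atTop (𝓝 y) := by
    simpa only [hy.eq] using hlim.tendsto_at hyS
  exact (tendsto_of_lipschitzOnWith_of_tendsto_apply hK hT hmaps hyS hTy hx0 hxrec).cauchySeq

/-- Under a sequence of uniformly convergent ρ-contractions on a compact subset of a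
Banach space, the iterates x_{k+1} = T_k(x_k) form a Cauchy sequence. -/
theorem stmt_3 {X : Type*} [NormedAddCommGroup X] [NormedSpace ℝ X] [CompleteSpace X]
    (S : Set X) (hS : IsCompact S)
    (T : ℕ → X → X) (Tinf : X → X) (ρ : ℝ) (hρ0 : 0 ≤ ρ) (hρ1 : ρ < 1)
    (hmaps : ∀ k, Set.MapsTo (T k) S S) (hmapsinf : Set.MapsTo Tinf S S)
    (hcontr : ∀ k, ∀ x ∈ S, ∀ y ∈ S, ‖T k x - T k y‖ ≤ ρ * ‖x - y‖)
    (hunif : ∀ ε > 0, ∃ N, ∀ k ≥ N, ∀ x ∈ S, ‖T k x - Tinf x‖ ≤ ε)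
    (x : ℕ → X) (hx0 : x 0 ∈ S) (hxrec : ∀ k, x (k + 1) = T k (x k)) :
    CauchySeq x :=
  stmt_3_general S hS T Tinf ρ hρ0 hρ1 hmaps hmapsinf hcontr hunif x hx0 hxrec
end

section
/- Let Γ > 0 be a scalar, β ∈ (0,1), λ > 0, and define the linear operator T on continuous functions x : [0,L] → ℝ by T(x)(t) = (1−β)x(t) − (1−β)e^{−Γt} ∫_0^t e^{Γs} Γ x(s) ds. Then for all continuous x, y : [0,L] → ℝ, ‖T(x) − T(y)‖_λ ≤ (1−β)(1 + Γ/(Γ+λ)) ‖x − y‖_λ. -/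
/-!
Write `d = x - y`. Then `T x - T y = (1 - β) (d - F d)`, where `F d` is the output of the
first-order filter `z' = -Γ z + Γ d`, `z 0 = 0`. Bounding `|d s| ≤ ‖d‖_λ e^{λ s}` under the
integral gives `|F d (t)| ≤ Γ ‖d‖_λ e^{-Γ t} ∫₀ᵗ e^{(Γ+λ) s} ds ≤ Γ/(Γ+λ) ‖d‖_λ e^{λ t}`, so
`‖F d‖_λ ≤ Γ/(Γ+λ) ‖d‖_λ`, and the triangle inequality finishes.
-/

open Set intervalIntegral

noncomputable section

def lambdaNorm (l L : ℝ) (f : ℝ → ℝ) : ℝ :=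
  ⨆ t : Icc (0:ℝ) L, Real.exp (-l * t) * |f t|

def firstOrderFilter (Γ : ℝ) (d : ℝ → ℝ) (t : ℝ) : ℝ :=
  Real.exp (-Γ * t) * ∫ s in (0:ℝ)..t, Real.exp (Γ * s) * Γ * d s

end

section LambdaNorm

variable {l L : ℝ} {f : ℝ → ℝ}

lemma lambdaNorm_nonneg : 0 ≤ lambdaNorm l L f :=
  Real.iSup_nonneg fun _ => by positivity

lemma lambdaNorm_le {C : ℝ} (hC : 0 ≤ C)
    (h : ∀ t ∈ Icc 0 L, Real.exp (-l * t) * |f t| ≤ C) : lambdaNorm l L f ≤ C :=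
  Real.iSup_le (fun t => h t t.2) hC

lemma exp_mul_abs_le_lambdaNorm (hf : ContinuousOn f (Icc 0 L)) {t : ℝ} (ht : t ∈ Icc 0 L) :
    Real.exp (-l * t) * |f t| ≤ lambdaNorm l L f := by
  have hcont : ContinuousOn (fun s => Real.exp (-l * s) * |f s|) (Icc 0 L) :=
    (Real.continuous_exp.comp (continuous_const_mul (-l))).continuousOn.mul hf.abs
  have hbdd : BddAbove (range fun s : Icc (0:ℝ) L => Real.exp (-l * s) * |f s|) := by
    refine (isCompact_Icc.bddAbove_image hcont).mono ?_
    rintro _ ⟨s, rfl⟩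
    exact ⟨s, s.2, rfl⟩
  exact le_ciSup hbdd ⟨t, ht⟩

lemma abs_le_lambdaNorm_mul_exp (hf : ContinuousOn f (Icc 0 L)) {t : ℝ} (ht : t ∈ Icc 0 L) :
    |f t| ≤ lambdaNorm l L f * Real.exp (l * t) :=
  calc |f t| = Real.exp (-l * t) * |f t| * Real.exp (l * t) := by
        rw [mul_right_comm, ← Real.exp_add]; simp
    _ ≤ lambdaNorm l L f * Real.exp (l * t) := by
        gcongr; exact exp_mul_abs_le_lambdaNorm hf ht

end LambdaNorm

lemma integral_exp_const_mul {c : ℝ} (hc : c ≠ 0) (t : ℝ) :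
    ∫ s in (0:ℝ)..t, Real.exp (c * s) = (Real.exp (c * t) - 1) / c := by
  rw [integral_comp_mul_left (fun s => Real.exp s) hc, integral_exp]
  simp [div_eq_inv_mul]

lemma abs_integral_exp_mul_le {Γ l M t : ℝ} {d : ℝ → ℝ} (hΓl : 0 < Γ + l) (ht : 0 ≤ t)
    (hd : ∀ s ∈ Icc 0 t, |d s| ≤ M * Real.exp (l * s)) :
    |∫ s in (0:ℝ)..t, Real.exp (Γ * s) * d s| ≤ M * Real.exp ((Γ + l) * t) / (Γ + l) := by
  have hM : 0 ≤ M := by simpa using (abs_nonneg _).trans (hd 0 ⟨le_rfl, ht⟩)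
  have hpoint : ∀ s ∈ Ioc 0 t, ‖Real.exp (Γ * s) * d s‖ ≤ M * Real.exp ((Γ + l) * s) := by
    intro s hs
    rw [Real.norm_eq_abs, abs_mul, abs_of_pos (Real.exp_pos _), add_mul, Real.exp_add]
    calc Real.exp (Γ * s) * |d s| ≤ Real.exp (Γ * s) * (M * Real.exp (l * s)) := by
          gcongr; exact hd s (Ioc_subset_Icc_self hs)
      _ = M * (Real.exp (Γ * s) * Real.exp (l * s)) := by ring
  calc |∫ s in (0:ℝ)..t, Real.exp (Γ * s) * d s|
      ≤ ∫ s in (0:ℝ)..t, M * Real.exp ((Γ + l) * s) :=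
        norm_integral_le_of_norm_le ht (.of_forall hpoint) <|
          (continuous_const.mul (Real.continuous_exp.comp (continuous_const_mul _))).intervalIntegrable
            _ _
    _ = M * ((Real.exp ((Γ + l) * t) - 1) / (Γ + l)) := by
        rw [integral_const_mul, integral_exp_const_mul hΓl.ne']
    _ ≤ M * Real.exp ((Γ + l) * t) / (Γ + l) := by
        rw [mul_div_assoc]; gcongr; linarith

section FirstOrderFilter

variable {Γ l L t : ℝ}

lemma firstOrderFilter_sub {x y : ℝ → ℝ} (hx : ContinuousOn x (Icc 0 L))
    (hy : ContinuousOn y (Icc 0 L)) (ht : t ∈ Icc 0 L) :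
    firstOrderFilter Γ x t - firstOrderFilter Γ y t =
      firstOrderFilter Γ (fun s => x s - y s) t := by
  have hsub : uIcc 0 t ⊆ Icc 0 L := by rw [uIcc_of_le ht.1]; exact Icc_subset_Icc_right ht.2
  have hker : ContinuousOn (fun s => Real.exp (Γ * s) * Γ) (uIcc 0 t) := by fun_prop
  have hix : IntervalIntegrable (fun s => Real.exp (Γ * s) * Γ * x s) MeasureTheory.volume 0 t :=
    (hker.mul (hx.mono hsub)).intervalIntegrable
  have hiy : IntervalIntegrable (fun s => Real.exp (Γ * s) * Γ * y s) MeasureTheory.volume 0 t :=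
    (hker.mul (hy.mono hsub)).intervalIntegrable
  simp only [firstOrderFilter]
  rw [← mul_sub, ← integral_sub hix hiy]
  simp only [mul_sub]

lemma exp_mul_abs_firstOrderFilter_le {d : ℝ → ℝ} (hΓ : 0 ≤ Γ) (hΓl : 0 < Γ + l)
    (hd : ContinuousOn d (Icc 0 L)) (ht : t ∈ Icc 0 L) :
    Real.exp (-l * t) * |firstOrderFilter Γ d t| ≤ Γ / (Γ + l) * lambdaNorm l L d := by
  set N := lambdaNorm l L d
  have hint : |∫ s in (0:ℝ)..t, Real.exp (Γ * s) * (Γ * d s)|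
      ≤ Γ * N * Real.exp ((Γ + l) * t) / (Γ + l) := by
    refine abs_integral_exp_mul_le hΓl ht.1 fun s hs => ?_
    rw [abs_mul, abs_of_nonneg hΓ, mul_assoc]
    gcongr
    exact abs_le_lambdaNorm_mul_exp hd (Icc_subset_Icc_right ht.2 hs)
  calc Real.exp (-l * t) * |firstOrderFilter Γ d t|
      = Real.exp (-((Γ + l) * t)) * |∫ s in (0:ℝ)..t, Real.exp (Γ * s) * (Γ * d s)| := by
        simp only [firstOrderFilter, abs_mul, abs_of_pos (Real.exp_pos _), mul_assoc,
          ← mul_assoc (Real.exp (-l * t)), ← Real.exp_add]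
        ring_nf
    _ ≤ Real.exp (-((Γ + l) * t)) * (Γ * N * Real.exp ((Γ + l) * t) / (Γ + l)) := by
        gcongr
    _ = Γ / (Γ + l) * N := by
        rw [Real.exp_neg]
        field_simp

end FirstOrderFilter

theorem stmt_5_general (L Γ β l : ℝ) (hΓ : 0 < Γ) (hβ1 : β < 1)
    (hl : 0 < l)
    (T : (ℝ → ℝ) → (ℝ → ℝ))
    (hT : ∀ x : ℝ → ℝ, ∀ t : ℝ,
      T x t = (1 - β) * x t
        - (1 - β) * Real.exp (-Γ * t) * ∫ s in (0:ℝ)..t, Real.exp (Γ * s) * Γ * x s)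
    (x y : ℝ → ℝ) (hx : ContinuousOn x (Icc 0 L)) (hy : ContinuousOn y (Icc 0 L)) :
    (⨆ t : Icc (0:ℝ) L, Real.exp (-l * t) * |T x t - T y t|) ≤
      (1 - β) * (1 + Γ / (Γ + l)) *
        (⨆ t : Icc (0:ℝ) L, Real.exp (-l * t) * |x t - y t|) := by
  change lambdaNorm l L (fun t => T x t - T y t) ≤
    (1 - β) * (1 + Γ / (Γ + l)) * lambdaNorm l L (fun t => x t - y t)
  have hd : ContinuousOn (fun t => x t - y t) (Icc 0 L) := hx.sub hy
  have hβ : 0 ≤ 1 - β := sub_nonneg.2 hβ1.le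
  refine lambdaNorm_le (mul_nonneg (mul_nonneg hβ (by positivity)) lambdaNorm_nonneg) ?_
  intro t ht
  have hTxy : T x t - T y t =
      (1 - β) * ((x t - y t) - firstOrderFilter Γ (fun s => x s - y s) t) := by
    rw [hT, hT, ← firstOrderFilter_sub hx hy ht, firstOrderFilter, firstOrderFilter]
    ring
  calc Real.exp (-l * t) * |T x t - T y t|
      ≤ (1 - β) * (Real.exp (-l * t) * |x t - y t|
          + Real.exp (-l * t) * |firstOrderFilter Γ (fun s => x s - y s) t|) := by
        rw [hTxy, abs_mul, abs_of_nonneg hβ, mul_left_comm, ← mul_add]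
        gcongr
        exact abs_sub _ _
    _ ≤ (1 - β) * (lambdaNorm l L (fun t => x t - y t)
          + Γ / (Γ + l) * lambdaNorm l L (fun t => x t - y t)) :=
        mul_le_mul_of_nonneg_left (add_le_add (exp_mul_abs_le_lambdaNorm hd ht)
          (exp_mul_abs_firstOrderFilter_le hΓ.le (add_pos hΓ hl) hd ht)) hβ
    _ = (1 - β) * (1 + Γ / (Γ + l)) * lambdaNorm l L (fun t => x t - y t) := by ring

/-- The contraction estimate for the I-type ILC operator in the λ-norm:
‖T(x) − T(y)‖_λ ≤ (1−β)(1 + Γ/(Γ+λ)) ‖x − y‖_λ. -/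
theorem stmt_5 (L Γ β l : ℝ) (hL : 0 < L) (hΓ : 0 < Γ) (hβ0 : 0 < β) (hβ1 : β < 1)
    (hl : 0 < l)
    (T : (ℝ → ℝ) → (ℝ → ℝ))
    (hT : ∀ x : ℝ → ℝ, ∀ t : ℝ,
      T x t = (1 - β) * x t
        - (1 - β) * Real.exp (-Γ * t) * ∫ s in (0:ℝ)..t, Real.exp (Γ * s) * Γ * x s)
    (x y : ℝ → ℝ) (hx : ContinuousOn x (Icc 0 L)) (hy : ContinuousOn y (Icc 0 L)) :
    (⨆ t : Icc (0:ℝ) L, Real.exp (-l * t) * |T x t - T y t|) ≤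
      (1 - β) * (1 + Γ / (Γ + l)) *
        (⨆ t : Icc (0:ℝ) L, Real.exp (-l * t) * |x t - y t|) :=
  stmt_5_general L Γ β l hΓ hβ1 hl T hT x y hx hy
end

section
/- Let Γ > 0, λ > 0, L > 0, and suppose y_k : [0,L] → ℝ are continuously differentiable functions with y_k(0) = 0 satisfying ẏ_k(t) = ẏ_{k−1}(t) − Γ y_k(t). Define J_k = ∫_0^L e^{−λt} (ẏ_k(t))^2 dt. Then J_k − J_{k−1} ≤ −(Γ^2 + λΓ) ∫_0^L e^{−λt} y_k(t)^2 dt; in particular {J_k} is non-increasing. -/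
open Set

/-!
Substituting `ẏ_{k-1} = ẏ_k + Γ y_k` into `J_{k-1}` gives
`J_{k-1} = J_k + 2Γ ∫ e^{-λt} y_k ẏ_k + Γ² ∫ e^{-λt} y_k²`, and integrating by parts
(`y_k(0) = 0`) turns the cross term into `e^{-λL} y_k(L)² + λ ∫ e^{-λt} y_k²`. Hence
`J_k - J_{k-1} = -(Γ² + λΓ) ∫ e^{-λt} y_k² - Γ e^{-λL} y_k(L)²`, and the boundary term
is nonpositive.
-/

open intervalIntegral

theorem two_mul_integral_exp_mul_mul_deriv {f f' : ℝ → ℝ} {a b : ℝ} (l : ℝ)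
    (hf : ∀ t ∈ uIcc a b, HasDerivAt f (f' t) t) (hf' : ContinuousOn f' (uIcc a b)) :
    2 * ∫ t in a..b, Real.exp (-l * t) * (f t * f' t) =
      Real.exp (-l * b) * f b ^ 2 - Real.exp (-l * a) * f a ^ 2 +
        l * ∫ t in a..b, Real.exp (-l * t) * f t ^ 2 := by
  have hfc : ContinuousOn f (uIcc a b) := fun t ht => (hf t ht).continuousAt.continuousWithinAt
  have hexp : Continuous fun t : ℝ => Real.exp (-l * t) := by fun_prop
  have hsq : IntervalIntegrable (fun t => Real.exp (-l * t) * f t ^ 2) MeasureTheory.volume a b :=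
    (hexp.continuousOn.mul (hfc.pow 2)).intervalIntegrable
  have hcross : IntervalIntegrable (fun t => Real.exp (-l * t) * (f t * f' t))
      MeasureTheory.volume a b :=
    (hexp.continuousOn.mul (hfc.mul hf')).intervalIntegrable
  have hderiv : ∀ t ∈ uIcc a b, HasDerivAt (fun s => Real.exp (-l * s) * f s ^ 2)
      (-l * (Real.exp (-l * t) * f t ^ 2) + 2 * (Real.exp (-l * t) * (f t * f' t))) t := by
    intro t ht
    have hexp' : HasDerivAt (fun s => Real.exp (-l * s)) (Real.exp (-l * t) * -l) t :=
      ((hasDerivAt_id t).const_mul (-l)).exp.congr_deriv (by simp)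
    exact (hexp'.mul ((hf t ht).fun_pow 2)).congr_deriv (by ring)
  have hFTC := integral_eq_sub_of_hasDerivAt hderiv
    ((hsq.const_mul (-l)).add (hcross.const_mul 2))
  rw [integral_add (hsq.const_mul _) (hcross.const_mul _), integral_const_mul,
    integral_const_mul] at hFTC
  linarith

theorem integral_exp_mul_deriv_sq_sub_of_deriv_eq {y y' z' : ℝ → ℝ} {L : ℝ} (Γ l : ℝ)
    (hy : ∀ t ∈ uIcc 0 L, HasDerivAt y (y' t) t) (hy' : ContinuousOn y' (uIcc 0 L))
    (hy0 : y 0 = 0) (hrec : ∀ t ∈ uIcc 0 L, y' t = z' t - Γ * y t) :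
    (∫ t in (0:ℝ)..L, Real.exp (-l * t) * y' t ^ 2) -
        ∫ t in (0:ℝ)..L, Real.exp (-l * t) * z' t ^ 2 =
      -(Γ ^ 2 + l * Γ) * (∫ t in (0:ℝ)..L, Real.exp (-l * t) * y t ^ 2) -
        Γ * (Real.exp (-l * L) * y L ^ 2) := by
  have hyc : ContinuousOn y (uIcc 0 L) := fun t ht => (hy t ht).continuousAt.continuousWithinAt
  have hexp : ContinuousOn (fun t : ℝ => Real.exp (-l * t)) (uIcc 0 L) := by fun_prop
  have hsq' : IntervalIntegrable (fun t => Real.exp (-l * t) * y' t ^ 2) MeasureTheory.volume 0 L :=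
    (hexp.mul (hy'.pow 2)).intervalIntegrable
  have hsq : IntervalIntegrable (fun t => Real.exp (-l * t) * y t ^ 2) MeasureTheory.volume 0 L :=
    (hexp.mul (hyc.pow 2)).intervalIntegrable
  have hcross : IntervalIntegrable (fun t => Real.exp (-l * t) * (y t * y' t))
      MeasureTheory.volume 0 L :=
    (hexp.mul (hyc.mul hy')).intervalIntegrable
  have hexpand : (∫ t in (0:ℝ)..L, Real.exp (-l * t) * z' t ^ 2) =
      (∫ t in (0:ℝ)..L, Real.exp (-l * t) * y' t ^ 2) +
        2 * Γ * (∫ t in (0:ℝ)..L, Real.exp (-l * t) * (y t * y' t)) +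
        Γ ^ 2 * ∫ t in (0:ℝ)..L, Real.exp (-l * t) * y t ^ 2 := by
    rw [← integral_const_mul, ← integral_const_mul, ← integral_add hsq' (hcross.const_mul _),
      ← integral_add (hsq'.add (hcross.const_mul _)) (hsq.const_mul _)]
    refine integral_congr fun t ht => ?_
    rw [hrec t ht]
    ring
  have hparts := two_mul_integral_exp_mul_mul_deriv l hy hy'
  rw [hy0] at hparts
  linear_combination (-Γ) * hparts - hexpand

/-- Monotonicity of the weighted energy J_k for the β = 0 ILC recursion
ẏ_k = ẏ_{k−1} − Γ y_k:
J_k − J_{k−1} ≤ −(Γ² + λΓ) ∫₀ᴸ e^{−λt} y_k(t)² dt, so {J_k} is non-increasing. -/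
theorem stmt_10 (L Γ l : ℝ) (hL : 0 < L) (hΓ : 0 < Γ) (hl : 0 < l)
    (y y' : ℕ → ℝ → ℝ)
    (hderiv : ∀ k t, HasDerivAt (y k) (y' k t) t)
    (hcont : ∀ k, Continuous (y' k))
    (hinit : ∀ k, y k 0 = 0)
    (hrec : ∀ k, 1 ≤ k → ∀ t ∈ Icc (0:ℝ) L, y' k t = y' (k - 1) t - Γ * y k t)
    (J : ℕ → ℝ)
    (hJ : ∀ k, J k = ∫ t in (0:ℝ)..L, Real.exp (-l * t) * (y' k t) ^ 2) :
    ∀ k, 1 ≤ k →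
      J k - J (k - 1) ≤
        -(Γ ^ 2 + l * Γ) * ∫ t in (0:ℝ)..L, Real.exp (-l * t) * (y k t) ^ 2 ∧
      J k ≤ J (k - 1) := by
  intro k hk
  rw [← uIcc_of_le hL.le] at hrec
  have hstep := integral_exp_mul_deriv_sq_sub_of_deriv_eq Γ l (fun t _ => hderiv k t)
    (hcont k).continuousOn (hinit k) (hrec k hk)
  have hboundary : 0 ≤ Γ * (Real.exp (-l * L) * y k L ^ 2) := by positivity
  have hweighted : 0 ≤ ∫ t in (0:ℝ)..L, Real.exp (-l * t) * y k t ^ 2 :=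
    integral_nonneg hL.le fun t _ => by positivity
  have hcoeff : 0 ≤ Γ ^ 2 + l * Γ := by positivity
  have hdecrease : J k - J (k - 1) ≤
      -(Γ ^ 2 + l * Γ) * ∫ t in (0:ℝ)..L, Real.exp (-l * t) * y k t ^ 2 := by
    rw [hJ, hJ]
    linarith
  exact ⟨hdecrease, by linarith [mul_nonneg hcoeff hweighted]⟩
end

section
/- Under the hypotheses of the previous statement (scalar case, y_k(0) = 0, ẏ_k = ẏ_{k−1} − Γ y_k with Γ > 0), the L²-norm of y_k on [0,L] tends to 0 as k → ∞, i.e., lim_{k→∞} ∫_0^L y_k(t)^2 dt = 0. -/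
/-!
Since `y'ₖ₋₁ = y'ₖ + Γ yₖ`, expanding the square and integrating `2 yₖ y'ₖ = (yₖ²)'` gives the
energy identity `Jₖ₋₁ = Jₖ + Γ yₖ(L)² + Γ² ∫ yₖ²` for `Jₖ = ∫ y'ₖ²`. So `Jₖ` is a non-increasing
sequence of non-negative numbers, its consecutive differences tend to `0`, and they dominate
`Γ² ∫ yₖ²`.
-/

open Set Filter Topology intervalIntegral

lemma tendsto_zero_of_le_sub_succ {a J : ℕ → ℝ} (ha : ∀ k, 0 ≤ a k) (hJ : BddBelow (range J))
    (h : ∀ k, a (k + 1) ≤ J k - J (k + 1)) : Tendsto a atTop (𝓝 0) := by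
  have hanti : Antitone J := antitone_nat_of_succ_le fun k => by linarith [h k, ha (k + 1)]
  have hlim := tendsto_atTop_ciInf hanti hJ
  have hdiff : Tendsto (fun k => J k - J (k + 1)) atTop (𝓝 0) := by
    simpa using hlim.sub (hlim.comp (tendsto_add_atTop_nat 1))
  exact (tendsto_add_atTop_iff_nat 1).mp (squeeze_zero (fun k => ha _) h hdiff)

lemma integral_sq_deriv_add_mul {y y' : ℝ → ℝ} (a b Γ : ℝ) (hy : ∀ t, HasDerivAt y (y' t) t)
    (hy' : Continuous y') :
    ∫ t in a..b, (y' t + Γ * y t) ^ 2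
      = (∫ t in a..b, y' t ^ 2) + Γ * (y b ^ 2 - y a ^ 2) + Γ ^ 2 * ∫ t in a..b, y t ^ 2 := by
  have hyc : Continuous y := Differentiable.continuous fun t => (hy t).differentiableAt
  have hparts : ∫ t in a..b, y' t * y t + y t * y' t = y b * y b - y a * y a :=
    integral_deriv_mul_eq_sub (fun t _ => hy t) (fun t _ => hy t)
      (hy'.intervalIntegrable _ _) (hy'.intervalIntegrable _ _)
  calc ∫ t in a..b, (y' t + Γ * y t) ^ 2
      = ∫ t in a..b, (y' t ^ 2 + Γ * (y' t * y t + y t * y' t)) + Γ ^ 2 * y t ^ 2 := by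
        congr 1; ext t; ring
    _ = _ := by
        rw [integral_add, integral_add, integral_const_mul, integral_const_mul, hparts]
        · ring
        all_goals exact Continuous.intervalIntegrable (by fun_prop) _ _

/-- For the β = 0 ILC recursion ẏ_k = ẏ_{k−1} − Γ y_k with y_k(0) = 0 and Γ > 0,
the L²-norm of y_k on [0,L] tends to 0 as k → ∞. -/
theorem stmt_11 (L Γ : ℝ) (hL : 0 < L) (hΓ : 0 < Γ)
    (y y' : ℕ → ℝ → ℝ)
    (hderiv : ∀ k t, HasDerivAt (y k) (y' k t) t)
    (hcont : ∀ k, Continuous (y' k))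
    (hinit : ∀ k, y k 0 = 0)
    (hrec : ∀ k, 1 ≤ k → ∀ t ∈ Icc (0:ℝ) L, y' k t = y' (k - 1) t - Γ * y k t) :
    Tendsto (fun k => ∫ t in (0:ℝ)..L, (y k t) ^ 2) atTop (nhds 0) := by
  set J : ℕ → ℝ := fun k => ∫ t in (0:ℝ)..L, y' k t ^ 2
  have hJ : BddBelow (range J) :=
    ⟨0, by rintro _ ⟨k, rfl⟩; exact integral_nonneg hL.le fun t _ => sq_nonneg _⟩
  have hstep : ∀ k, Γ ^ 2 * ∫ t in (0:ℝ)..L, y (k + 1) t ^ 2 ≤ J k - J (k + 1) := by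
    intro k
    have hJk : J k = ∫ t in (0:ℝ)..L, (y' (k + 1) t + Γ * y (k + 1) t) ^ 2 :=
      integral_congr fun t ht => by
        rw [uIcc_of_le hL.le] at ht
        simp [hrec (k + 1) (by omega) t ht]
    rw [hJk, integral_sq_deriv_add_mul 0 L Γ (hderiv (k + 1)) (hcont (k + 1)), hinit]
    nlinarith [sq_nonneg (y (k + 1) L)]
  have hlim := tendsto_zero_of_le_sub_succ
    (fun k => mul_nonneg (sq_nonneg Γ) (integral_nonneg hL.le fun t _ => sq_nonneg _)) hJ hstep
  have hscaled := hlim.const_mul (Γ ^ 2)⁻¹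
  rw [mul_zero] at hscaled
  exact hscaled.congr fun k => inv_mul_cancel_left₀ (pow_ne_zero 2 hΓ.ne') _
end

section
/- Let (X, ‖·‖) be a normed space, ρ ∈ (0,1), and suppose sequences y_k ∈ X and contraction maps G_k : X → X with ratio ρ satisfy y_k = G_k(y_{k−1}) + d_k where ‖d_k‖ ≤ ρ D_1 for all k, G_k → G_∞ uniformly on a bounded set containing all y_k, and y_∞ is the fixed point of G_∞. Then limsup_{k→∞} ‖y_k − y_∞‖ ≤ ρ D_1/(1−ρ). -/
open Filter

/-! With `L = b / (1 - ρ)` a recursion `a (k + 1) ≤ ρ a k + b` reads `a (k + 1) - L ≤ ρ (a k - L)`,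
so `a k - L` is eventually dominated by a geometric sequence. For the errors `‖y k - y∞‖` such a
recursion holds with `b = ρ D₁ + ε`, for every `ε > 0` once `k` is large: split
`y (k + 1) - y∞ = (G (k + 1) - G∞) (y k) + (G∞ (y k) - G∞ y∞) + d (k + 1)` and use uniform
convergence, the contraction property of `G∞` and the bound on `d`. -/

lemma limsup_le_div_one_sub_of_eventually_le_mul_add {a : ℕ → ℝ} {ρ b : ℝ}
    (hρ0 : 0 ≤ ρ) (hρ1 : ρ < 1) (ha : ∀ k, 0 ≤ a k)
    (hrec : ∀ᶠ k in atTop, a (k + 1) ≤ ρ * a k + b) :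
    limsup a atTop ≤ b / (1 - ρ) := by
  obtain ⟨N, hN⟩ := eventually_atTop.1 hrec
  set L := b / (1 - ρ) with hL
  have hfixL : ρ * L + b = L := by
    rw [hL]
    field_simp [(sub_pos.2 hρ1).ne']
    ring
  have hgeom : ∀ m, a (m + N) ≤ ρ ^ m * (a N - L) + L := by
    intro m
    induction m with
    | zero => simp
    | succ m ih =>
      calc a (m + 1 + N) = a (m + N + 1) := by rw [add_right_comm]
        _ ≤ ρ * a (m + N) + b := hN _ (Nat.le_add_left N m)
        _ ≤ ρ * (ρ ^ m * (a N - L) + L) + b := by gcongr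
        _ = ρ ^ (m + 1) * (a N - L) + L := by linear_combination hfixL
  have htend : Tendsto (fun m : ℕ => ρ ^ m * (a N - L) + L) atTop (nhds L) := by
    simpa using ((tendsto_pow_atTop_nhds_zero_of_lt_one hρ0 hρ1).mul_const (a N - L)).add_const L
  rw [← limsup_nat_add a N, ← htend.limsup_eq]
  exact limsup_le_limsup (Eventually.of_forall hgeom)
    (isCoboundedUnder_le_of_le atTop fun m => ha _) htend.isBoundedUnder_le

lemma limsup_le_div_one_sub_of_forall_pos_eventually_le_mul_add {a : ℕ → ℝ} {ρ b : ℝ}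
    (hρ0 : 0 ≤ ρ) (hρ1 : ρ < 1) (ha : ∀ k, 0 ≤ a k)
    (hrec : ∀ ε > 0, ∀ᶠ k in atTop, a (k + 1) ≤ ρ * a k + b + ε) :
    limsup a atTop ≤ b / (1 - ρ) := by
  have h1ρ : 0 < 1 - ρ := sub_pos.2 hρ1
  refine le_of_forall_pos_le_add fun δ hδ => ?_
  calc limsup a atTop ≤ (b + δ * (1 - ρ)) / (1 - ρ) :=
        limsup_le_div_one_sub_of_eventually_le_mul_add hρ0 hρ1 ha <|
          (hrec _ (mul_pos hδ h1ρ)).mono fun k hk => hk.trans_eq (add_assoc _ _ _)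
    _ = b / (1 - ρ) + δ := by field_simp

theorem stmt_15_general {X : Type*} [NormedAddCommGroup X]
    (ρ D₁ : ℝ) (hρ0 : 0 < ρ) (hρ1 : ρ < 1)
    (S : Set X)
    (G : ℕ → X → X) (Ginf : X → X)
    (hcontrinf : ∀ x y : X, ‖Ginf x - Ginf y‖ ≤ ρ * ‖x - y‖)
    (hunif : ∀ ε > 0, ∃ N, ∀ k ≥ N, ∀ x ∈ S, ‖G k x - Ginf x‖ ≤ ε)
    (y : ℕ → X) (d : ℕ → X) (yinf : X)
    (hyS : ∀ k, y k ∈ S)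
    (hrec : ∀ k, 1 ≤ k → y k = G k (y (k - 1)) + d k)
    (hd : ∀ k, ‖d k‖ ≤ ρ * D₁)
    (hfix : Ginf yinf = yinf) :
    limsup (fun k => ‖y k - yinf‖) atTop ≤ ρ * D₁ / (1 - ρ) := by
  refine limsup_le_div_one_sub_of_forall_pos_eventually_le_mul_add hρ0.le hρ1
    (fun k => norm_nonneg _) fun ε hε => ?_
  obtain ⟨N, hN⟩ := hunif ε hε
  filter_upwards [eventually_ge_atTop N] with k hk
  have hsplit : y (k + 1) - yinf
      = (G (k + 1) (y k) - Ginf (y k)) + (Ginf (y k) - Ginf yinf) + d (k + 1) := by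
    rw [hrec (k + 1) (Nat.le_add_left 1 k), Nat.add_sub_cancel, hfix]
    abel
  calc ‖y (k + 1) - yinf‖
      ≤ ‖G (k + 1) (y k) - Ginf (y k)‖ + ‖Ginf (y k) - Ginf yinf‖ + ‖d (k + 1)‖ := by
        rw [hsplit]
        exact norm_add₃_le
    _ ≤ ε + ρ * ‖y k - yinf‖ + ρ * D₁ := by
        gcongr
        · exact hN (k + 1) (by omega) (y k) (hyS k)
        · exact hcontrinf _ _
        · exact hd _
    _ = ρ * ‖y k - yinf‖ + ρ * D₁ + ε := by ring

/-- Convergence of the ILES error to the λ-norm ball: if y_k = G_k(y_{k−1}) + d_k with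
‖d_k‖ ≤ ρ D₁, the G_k are ρ-contractions converging uniformly on a bounded set S
containing all y_k and the fixed point y_∞ of G_∞, then
limsup ‖y_k − y_∞‖ ≤ ρ D₁/(1−ρ). -/
theorem stmt_15 {X : Type*} [NormedAddCommGroup X] [NormedSpace ℝ X]
    (ρ D₁ D₂ : ℝ) (hρ0 : 0 < ρ) (hρ1 : ρ < 1) (hD₁ : 0 ≤ D₁)
    (S : Set X) (hSbdd : ∀ x ∈ S, ‖x‖ ≤ D₂)
    (G : ℕ → X → X) (Ginf : X → X)
    (hcontr : ∀ k, ∀ x y : X, ‖G k x - G k y‖ ≤ ρ * ‖x - y‖)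
    (hcontrinf : ∀ x y : X, ‖Ginf x - Ginf y‖ ≤ ρ * ‖x - y‖)
    (hunif : ∀ ε > 0, ∃ N, ∀ k ≥ N, ∀ x ∈ S, ‖G k x - Ginf x‖ ≤ ε)
    (y : ℕ → X) (d : ℕ → X) (yinf : X)
    (hyS : ∀ k, y k ∈ S) (hyinfS : yinf ∈ S)
    (hrec : ∀ k, 1 ≤ k → y k = G k (y (k - 1)) + d k)
    (hd : ∀ k, ‖d k‖ ≤ ρ * D₁)
    (hfix : Ginf yinf = yinf) :
    limsup (fun k => ‖y k - yinf‖) atTop ≤ ρ * D₁ / (1 - ρ) :=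
  stmt_15_general ρ D₁ hρ0 hρ1 S G Ginf hcontrinf hunif y d yinf hyS hrec hd hfix
end
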